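/- Let d n : ℕ with d, n ≥ 1. Let ρA : Matrix (Fin d) (Fin d) ℂ be positive definite and let μ : Fin n → ℝ with 0 < μ s for all s. Let σ½ := ρA½ ⊗ₖ Matrix.diagonal (fun s => (Real.sqrt (μ s) : ℂ)), where ρA½ is the positive semidefinite square root of ρA. Then { X : Matrix (Fin d × Fin n) (Fin d × Fin n) ℂ | Γ(X) is positive semidefinite } equals the closure (in the topology of the matrix space) of the set of all matrices of the form ∑ k, ∑ l, (a l ⊗ₖ (b k)ᴴ) * σ½ * ((a k)ᴴ ⊗ₖ b l), where k, l range over Fin N for some N : ℕ, a : Fin N → Matrix (Fin d) (Fin d) ℂ and b : Fin N → Matrix (Fin n) (Fin n) ℂ. -/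

import Mathlib

/-!
Writing `M = ∑ₖ aₖ ⊗ bₖᵀ`, the partial transpose of `∑ₖ ∑ₗ (aₗ ⊗ bₖᴴ) σ½ (aₖᴴ ⊗ bₗ)` is
`M σ½ Mᴴ`, because the second tensor factor of `σ½` is diagonal, hence symmetric. Every matrix on
the product index set is such a sum of Kronecker products, so the generating set consists of
exactly the `X` with `Γ(X) = M σ½ Mᴴ` for some `M`. As `σ½` is positive definite, these are
exactly the `X` with `Γ(X)` positive semidefinite; that set is closed, so the closure adds nothing.
-/

open Matrix ComplexOrder Kronecker

/-- Partial transpose with respect to the second tensor factor. -/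
def partialTranspose {d n : ℕ} (X : Matrix (Fin d × Fin n) (Fin d × Fin n) ℂ) :
    Matrix (Fin d × Fin n) (Fin d × Fin n) ℂ :=
  fun p q => X (p.1, q.2) (q.1, p.2)

/-- σ½ = ρA^{1/2} ⊗ₖ diagonal(√μ): the square root of the product density matrix. -/
noncomputable def sigmaHalf {d n : ℕ} (ρA : Matrix (Fin d) (Fin d) ℂ) (hρA : ρA.PosDef)
    (μ : Fin n → ℝ) : Matrix (Fin d × Fin n) (Fin d × Fin n) ℂ :=
  ((hρA.posSemidef.1.eigenvectorUnitary : Matrix (Fin d) (Fin d) ℂ) *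
    Matrix.diagonal ((↑) ∘ Real.sqrt ∘ hρA.posSemidef.1.eigenvalues : Fin d → ℂ) *
    star (hρA.posSemidef.1.eigenvectorUnitary : Matrix (Fin d) (Fin d) ℂ)) ⊗ₖ Matrix.diagonal (fun s => ((Real.sqrt (μ s) : ℝ) : ℂ))

open scoped MatrixOrder

theorem Matrix.exists_eq_sum_kronecker {R ι κ : Type*} [Semiring R] [Fintype ι] [DecidableEq ι]
    [Fintype κ] [DecidableEq κ] (M : Matrix (ι × κ) (ι × κ) R) :
    ∃ (N : ℕ) (a : Fin N → Matrix ι ι R) (b : Fin N → Matrix κ κ R), M = ∑ k, a k ⊗ₖ b k := by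
  let e := (Fintype.equivFin ((ι × κ) × (ι × κ))).symm
  refine ⟨_, fun k => single (e k).1.1 (e k).2.1 (M (e k).1 (e k).2),
    fun k => single (e k).1.2 (e k).2.2 1, ?_⟩
  rw [e.sum_comp (fun p => single p.1.1 p.2.1 (M p.1 p.2) ⊗ₖ single p.1.2 p.2.2 (1 : R))]
  simp only [single_kronecker_single, mul_one, Prod.mk.eta]
  exact (matrix_eq_sum_single M).trans (Fintype.sum_prod_type' fun i j => single i j (M i j)).symm

theorem Matrix.PosDef.exists_eq_mul_mul_conjTranspose {𝕜 m : Type*} [RCLike 𝕜] [Fintype m]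
    [DecidableEq m] {σ X : Matrix m m 𝕜} (hσ : σ.PosDef) (hX : X.PosSemidef) : ∃ M, X = M * σ * Mᴴ := by
  obtain ⟨b, rfl⟩ := CStarAlgebra.nonneg_iff_eq_star_mul_self.mp hX.nonneg
  obtain ⟨c, hc, rfl⟩ :=
    CStarAlgebra.isStrictlyPositive_iff_eq_star_mul_self.mp hσ.isStrictlyPositive
  obtain ⟨u, rfl⟩ := hc
  refine ⟨star b * star (↑u⁻¹ : Matrix m m 𝕜), ?_⟩
  simp only [← star_eq_conjTranspose, star_mul, star_star, mul_assoc]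
  rw [← mul_assoc (star (↑u⁻¹ : Matrix m m 𝕜)), ← star_mul, u.mul_inv, star_one, one_mul,
    u.mul_inv_cancel_left]

theorem Matrix.isClosed_setOf_posSemidef {𝕜 m : Type*} [RCLike 𝕜] [Fintype m] :
    IsClosed {A : Matrix m m 𝕜 | A.PosSemidef} := by
  simp only [posSemidef_iff_dotProduct_mulVec, Set.ofPred_and, Set.ofPred_forall]
  exact (isClosed_eq continuous_id.matrix_conjTranspose continuous_id).inter <|
    isClosed_iInter fun x => isClosed_le continuous_const <|
      continuous_const.dotProduct (continuous_id.matrix_mulVec continuous_const)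

section PartialTranspose

variable {d n : ℕ}

theorem partialTranspose_involutive :
    Function.Involutive (partialTranspose (d := d) (n := n)) := fun _ => rfl

@[simp]
theorem partialTranspose_kronecker (A : Matrix (Fin d) (Fin d) ℂ) (B : Matrix (Fin n) (Fin n) ℂ) :
    partialTranspose (A ⊗ₖ B) = A ⊗ₖ Bᵀ := rfl

@[simp]
theorem partialTranspose_sum {ι : Type*} (s : Finset ι)
    (X : ι → Matrix (Fin d × Fin n) (Fin d × Fin n) ℂ) :
    partialTranspose (∑ k ∈ s, X k) = ∑ k ∈ s, partialTranspose (X k) := by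
  ext p q
  simp only [partialTranspose, Matrix.sum_apply]

theorem continuous_partialTranspose : Continuous (partialTranspose (d := d) (n := n)) :=
  continuous_pi fun p => continuous_pi fun q =>
    (continuous_apply (q.1, p.2)).comp (continuous_apply (p.1, q.2))

theorem partialTranspose_sum_sum_kronecker_mul_mul {N : ℕ} (A : Matrix (Fin d) (Fin d) ℂ)
    {B : Matrix (Fin n) (Fin n) ℂ} (hB : Bᵀ = B)
    (a : Fin N → Matrix (Fin d) (Fin d) ℂ) (b : Fin N → Matrix (Fin n) (Fin n) ℂ) :
    partialTranspose (∑ k, ∑ l, (a l ⊗ₖ (b k)ᴴ) * (A ⊗ₖ B) * ((a k)ᴴ ⊗ₖ b l)) =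
      (∑ k, a k ⊗ₖ (b k)ᵀ) * (A ⊗ₖ B) * (∑ k, a k ⊗ₖ (b k)ᵀ)ᴴ := by
  simp only [← mul_kronecker_mul, partialTranspose_sum, partialTranspose_kronecker,
    conjTranspose_sum, conjTranspose_kronecker, Finset.sum_mul, Finset.mul_sum, transpose_mul, hB,
    mul_assoc, conjTranspose_transpose_eq_transpose_conjTranspose]

end PartialTranspose

theorem sigmaHalf_posDef {d n : ℕ} (ρA : Matrix (Fin d) (Fin d) ℂ) (hρA : ρA.PosDef)
    {μ : Fin n → ℝ} (hμ : ∀ s, 0 < μ s) : (sigmaHalf ρA hρA μ).PosDef := by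
  refine .kronecker ?_ (posDef_diagonal_iff.mpr fun s => ?_)
  · refine (Matrix.IsUnit.posDef_star_right_conjugate_iff Unitary.isUnit_coe).mpr <|
      posDef_diagonal_iff.mpr fun i => ?_
    simpa using hρA.eigenvalues_pos i
  · simpa using hμ s

theorem partialTranspose_sum_sum_mul_sigmaHalf_mul {d n N : ℕ} (ρA : Matrix (Fin d) (Fin d) ℂ)
    (hρA : ρA.PosDef) (μ : Fin n → ℝ)
    (a : Fin N → Matrix (Fin d) (Fin d) ℂ) (b : Fin N → Matrix (Fin n) (Fin n) ℂ) :
    partialTranspose (∑ k, ∑ l, (a l ⊗ₖ (b k)ᴴ) * sigmaHalf ρA hρA μ * ((a k)ᴴ ⊗ₖ b l)) =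
      (∑ k, a k ⊗ₖ (b k)ᵀ) * sigmaHalf ρA hρA μ * (∑ k, a k ⊗ₖ (b k)ᵀ)ᴴ :=
  partialTranspose_sum_sum_kronecker_mul_mul _ (diagonal_transpose _) a b

theorem stmt_4_general {d n : ℕ}
    (ρA : Matrix (Fin d) (Fin d) ℂ) (hρA : ρA.PosDef)
    (μ : Fin n → ℝ) (hμ : ∀ s, 0 < μ s) :
    { X : Matrix (Fin d × Fin n) (Fin d × Fin n) ℂ | (partialTranspose X).PosSemidef } =
      closure { X : Matrix (Fin d × Fin n) (Fin d × Fin n) ℂ |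
        ∃ (N : ℕ) (a : Fin N → Matrix (Fin d) (Fin d) ℂ)
          (b : Fin N → Matrix (Fin n) (Fin n) ℂ),
          X = ∑ k, ∑ l,
            (a l ⊗ₖ (b k)ᴴ) * sigmaHalf ρA hρA μ * ((a k)ᴴ ⊗ₖ b l) } := by
  have hσ := sigmaHalf_posDef ρA hρA hμ
  have hclosed : IsClosed { X : Matrix (Fin d × Fin n) (Fin d × Fin n) ℂ |
      (partialTranspose X).PosSemidef } :=
    isClosed_setOf_posSemidef.preimage continuous_partialTranspose
  rw [← hclosed.closure_eq]
  congr 1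
  ext X
  constructor
  · intro hX
    obtain ⟨M, hM⟩ := hσ.exists_eq_mul_mul_conjTranspose hX
    obtain ⟨N, a, b, rfl⟩ := exists_eq_sum_kronecker M
    refine ⟨N, a, fun k => (b k)ᵀ, ?_⟩
    have h := partialTranspose_sum_sum_mul_sigmaHalf_mul ρA hρA μ a fun k => (b k)ᵀ
    simp only [transpose_transpose, ← hM] at h
    exact (partialTranspose_involutive.injective h).symm
  · rintro ⟨N, a, b, rfl⟩
    rw [Set.mem_ofPred_eq, partialTranspose_sum_sum_mul_sigmaHalf_mul]
    exact hσ.posSemidef.mul_mul_conjTranspose_same _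

theorem stmt_4 {d n : ℕ} (hd : 1 ≤ d) (hn : 1 ≤ n)
    (ρA : Matrix (Fin d) (Fin d) ℂ) (hρA : ρA.PosDef)
    (μ : Fin n → ℝ) (hμ : ∀ s, 0 < μ s) :
    { X : Matrix (Fin d × Fin n) (Fin d × Fin n) ℂ | (partialTranspose X).PosSemidef } =
      closure { X : Matrix (Fin d × Fin n) (Fin d × Fin n) ℂ |
        ∃ (N : ℕ) (a : Fin N → Matrix (Fin d) (Fin d) ℂ)
          (b : Fin N → Matrix (Fin n) (Fin n) ℂ),
          X = ∑ k, ∑ l,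
            (a l ⊗ₖ (b k)ᴴ) * sigmaHalf ρA hρA μ * ((a k)ᴴ ⊗ₖ b l) } :=
  stmt_4_general ρA hρA μ hμ
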